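/- arXiv:1601.00108 — 3 statements merged into one kernel-verified Lean document; each statement's English description precedes it below -/
import Mathlib

section
/- Let S and R be finite sets, N a real S×R matrix, W = range(N), W^⊥ = ker(Nᵀ), and fix distinct i, o ∈ S. Then the supremum of the set {u_o : u is elementary in W^⊥ and u_i = 1} ∪ {0} equals the supremum of the set {w_i : w is elementary in W and w_o = −1} ∪ {0}. -/
open Matrix

/-- A vector `v` is elementary in a linear subspace `V ⊆ ℝ^S` if `v ∈ V`, `v ≠ 0`, and no
nonzero `v' ∈ V` has support strictly contained in the support of `v`. -/
def IsElementary {S : Type*} (V : Submodule ℝ (S → ℝ)) (v : S → ℝ) : Prop :=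
  v ∈ V ∧ v ≠ 0 ∧ ∀ v' ∈ V, v' ≠ 0 → ¬ Function.support v' ⊂ Function.support v

/-!
The two sets, with `0` adjoined, coincide. Let `u ∈ W^⊥` be elementary with `u i = 1` and
`u o ≠ 0`, and put `D = supp u \ {i, o}`. Some `w ∈ W` vanishes on `D` with `w o ≠ 0`: otherwise
evaluation at `o` is, on `W`, a linear combination of the evaluations at points of `D`, and this
combination is a vector of `W^⊥` supported in `D ∪ {o}`, strictly inside `supp u`. Shrinking the
support of `w` while keeping `w o ≠ 0` makes it elementary, and then `0 = u ⬝ w = w i + u o * w o`,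
so `w i = u o` once `w` is scaled to `w o = -1`. Since `W^⊥⊥ = W`, the same argument with the roles
of `W` and `W^⊥` exchanged gives the reverse inclusion.
-/

open Function LinearMap LinearMap.BilinForm

section

variable {S : Type*} {V : Submodule ℝ (S → ℝ)} {v : S → ℝ}

theorem IsElementary.smul (hv : IsElementary V v) {c : ℝ} (hc : c ≠ 0) :
    IsElementary V (c • v) := by
  refine ⟨V.smul_mem c hv.1, smul_ne_zero hc hv.2.1, fun v' hv' hv'0 hlt => ?_⟩
  rw [support_const_smul_of_ne_zero c v hc] at hlt
  exact hv.2.2 v' hv' hv'0 hlt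

theorem IsElementary.neg (hv : IsElementary V v) : IsElementary V (-v) := by
  simpa using hv.smul (neg_ne_zero.2 one_ne_zero)

theorem support_sub_smul_ssubset {v' : S → ℝ} (h : support v' ⊆ support v) {s : S}
    (hs : v' s ≠ 0) : support (v - (v s / v' s) • v') ⊂ support v := by
  refine (Set.ssubset_iff_of_subset fun t ht => ?_).2 ⟨s, h hs, by simp [field]⟩
  by_contra hvt
  have hv't : v' t = 0 := notMem_support.1 fun h' => hvt (h h')
  simp_all

theorem exists_isElementary_support_subset [Finite S] (hv : v ∈ V) {o : S} (ho : v o ≠ 0) :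
    ∃ w, IsElementary V w ∧ w o ≠ 0 ∧ support w ⊆ support v := by
  induction hsupp : support v using WellFoundedLT.induction generalizing v with
  | _ _ ih =>
  subst hsupp
  by_cases hel : IsElementary V v
  · exact ⟨v, hel, ho, subset_rfl⟩
  obtain ⟨v', hv', hv'0, hlt⟩ : ∃ v' ∈ V, v' ≠ 0 ∧ support v' ⊂ support v := by
    have hv0 : v ≠ 0 := fun h => ho (by simp [h])
    simpa [IsElementary, hv, hv0] using hel
  by_cases hv'o : v' o = 0
  · obtain ⟨s, hs⟩ := support_nonempty_iff.2 hv'0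
    have hlt' := support_sub_smul_ssubset hlt.subset hs
    obtain ⟨w, hw, hwo, hwv⟩ := ih _ hlt' (V.sub_mem hv (V.smul_mem _ hv'))
      (by simpa [hv'o] using ho) rfl
    exact ⟨w, hw, hwo, hwv.trans hlt'.subset⟩
  · obtain ⟨w, hw, hwo, hwv⟩ := ih _ hlt hv' hv'o rfl
    exact ⟨w, hw, hwo, hwv.trans hlt.subset⟩

end

section

variable {S : Type*} [Fintype S]

variable (S) in
abbrev dotProductForm : LinearMap.BilinForm ℝ (S → ℝ) := dotProductBilin ℝ ℝ

theorem dotProductForm_nondegenerate : (dotProductForm S).Nondegenerate :=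
  ⟨fun x hx => dotProduct_self_eq_zero.1 (hx x), fun y hy => dotProduct_self_eq_zero.1 (hy y)⟩

theorem dotProductForm_isRefl : (dotProductForm S).IsRefl := fun x y h => by
  simpa [dotProduct_comm] using h

theorem exists_mem_orthogonal_of_forall_apply_eq_zero (V : Submodule ℝ (S → ℝ)) {D : Set S}
    {o : S} (ho : o ∉ D) (h : ∀ v ∈ V, (∀ s ∈ D, v s = 0) → v o = 0) :
    ∃ y ∈ (dotProductForm S).orthogonal V, y o = 1 ∧ support y ⊆ insert o D := by
  classical
  let L : D → V →ₗ[ℝ] ℝ := fun s => (proj (s : S)).comp V.subtype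
  have hker : ⨅ s, ker (L s) ≤ ker ((proj o).comp V.subtype) := fun v hv => by
    simp only [Submodule.mem_iInf] at hv
    exact h v v.2 fun s hs => hv ⟨s, hs⟩
  obtain ⟨c, hc⟩ := (Submodule.mem_span_range_iff_exists_fun ℝ).1 (mem_span_of_iInf_ker_le_ker hker)
  -- on `V`, `v o = ∑ s, c s * v s`, so `e_o - ∑ s, c s • e_s` is orthogonal to `V`
  refine ⟨Pi.single o 1 - ∑ s, c s • Pi.single (s : S) 1, ?_, ?_, fun t ht => ?_⟩
  · refine mem_orthogonal_iff.2 fun v hv => ?_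
    have hv_o : ∑ s : D, c s * v s = v o := by simpa [L] using congr($hc ⟨v, hv⟩)
    simp [dotProduct_sub, dotProduct_sum, hv_o]
  · have : ∀ s : D, (s : S) ≠ o := fun s hs => ho (hs ▸ s.2)
    simp [this]
  · by_contra htD
    simp only [Set.mem_insert_iff, not_or] at htD
    have : ∀ s : D, (s : S) ≠ t := fun s hs => htD.2 (hs ▸ s.2)
    simp [htD.1, this] at ht

end

section

variable {S R : Type*} [Fintype S] [Fintype R]

theorem Matrix.ker_transpose_mulVecLin_eq_orthogonal (N : Matrix S R ℝ) :
    ker Nᵀ.mulVecLin = (dotProductForm S).orthogonal (range N.mulVecLin) := by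
  ext y
  have hadj : ∀ x, N *ᵥ x ⬝ᵥ y = x ⬝ᵥ Nᵀ *ᵥ y := fun x => by
    rw [dotProduct_comm, dotProduct_mulVec, ← mulVec_transpose, dotProduct_comm]
  simp only [mem_ker, mulVecLin_apply, mem_orthogonal_iff, mem_range, forall_exists_index,
    forall_apply_eq_imp_iff, dotProductBilin_apply_apply, hadj]
  exact ⟨fun h x => by rw [h, dotProduct_zero], dotProductForm_nondegenerate.2 _⟩

theorem Matrix.range_mulVecLin_eq_orthogonal (N : Matrix S R ℝ) :
    range N.mulVecLin = (dotProductForm S).orthogonal (ker Nᵀ.mulVecLin) := by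
  rw [ker_transpose_mulVecLin_eq_orthogonal,
    orthogonal_orthogonal dotProductForm_nondegenerate dotProductForm_isRefl]

end

section

variable {S : Type*} [Fintype S] {V : Submodule ℝ (S → ℝ)} {u : S → ℝ} {i o : S}

theorem IsElementary.exists_mem_apply_ne_zero_of_mem_orthogonal
    (hu : IsElementary ((dotProductForm S).orthogonal V) u) (hio : i ≠ o) (hui : u i ≠ 0)
    (huo : u o ≠ 0) : ∃ v ∈ V, v o ≠ 0 ∧ ∀ s ∈ support u \ {i, o}, v s = 0 := by
  by_contra! hcon
  obtain ⟨y, hy, hyo, hyu⟩ := exists_mem_orthogonal_of_forall_apply_eq_zero V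
    (D := support u \ {i, o}) (o := o) (by simp)
    fun v hv hvD => by_contra fun hvo => by
      obtain ⟨s, hs, hvs⟩ := hcon v hv hvo
      exact hvs (hvD s hs)
  refine hu.2.2 y hy (fun h => by simp [h] at hyo) <|
    (Set.ssubset_iff_of_subset fun s hs => ?_).2 ⟨i, hui, fun hi => ?_⟩
  · rcases hyu hs with rfl | hsD
    · exact huo
    · exact hsD.1
  · rcases hyu hi with h | hiD
    · exact hio h
    · simp at hiD

theorem IsElementary.exists_isElementary_of_mem_orthogonal
    (hu : IsElementary ((dotProductForm S).orthogonal V) u) (hio : i ≠ o) (hui : u i = 1)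
    (huo : u o ≠ 0) : ∃ w, IsElementary V w ∧ w o = -1 ∧ w i = u o := by
  obtain ⟨v, hv, hvo, hvu⟩ :=
    hu.exists_mem_apply_ne_zero_of_mem_orthogonal hio (hui ▸ one_ne_zero) huo
  obtain ⟨w, hw, hwo, hwv⟩ := exists_isElementary_support_subset hv hvo
  have horth : w i + u o * w o = 0 := by
    rw [← one_mul (w i), ← hui, ← Fintype.sum_eq_add (f := fun s => u s * w s) i o hio]
    · exact (dotProduct_comm u w).trans (mem_orthogonal_iff.1 hu.1 w hw.1)
    · rintro s ⟨hsi, hso⟩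
      by_cases hus : u s = 0
      · rw [hus, zero_mul]
      · rw [notMem_support.1 fun h => hwv h (hvu s ⟨hus, by simp [hsi, hso]⟩), mul_zero]
  refine ⟨-(w o)⁻¹ • w, hw.smul (by simp [hwo]), by simp [hwo], ?_⟩
  simp only [Pi.smul_apply, smul_eq_mul, neg_mul]
  field_simp
  linarith

end

/-- Lemma 3.11 (`lem:u_w`): the supremum of `u_o` over elementary `u ∈ W^⊥` with `u_i = 1`
(together with `0`) equals the supremum of `w_i` over elementary `w ∈ W` with `w_o = −1`
(together with `0`). -/
theorem sup_elementary_perp_eq_sup_elementary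
    {S R : Type*} [Fintype S] [Fintype R]
    (N : Matrix S R ℝ) (i o : S) (hio : i ≠ o) :
    sSup ({x : ℝ | ∃ u : S → ℝ,
        IsElementary (LinearMap.ker Nᵀ.mulVecLin) u ∧ u i = 1 ∧ x = u o} ∪ {0}) =
    sSup ({x : ℝ | ∃ w : S → ℝ,
        IsElementary (LinearMap.range N.mulVecLin) w ∧ w o = -1 ∧ x = w i} ∪ {0}) := by
  congr 1
  ext x
  simp only [Set.mem_union, Set.mem_ofPred_eq, Set.mem_singleton_iff]
  constructor
  · rintro (⟨u, hu, hui, rfl⟩ | rfl)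
    · rcases eq_or_ne (u o) 0 with huo | huo
      · exact .inr huo
      rw [N.ker_transpose_mulVecLin_eq_orthogonal] at hu
      obtain ⟨w, hw, hwo, hwi⟩ := hu.exists_isElementary_of_mem_orthogonal hio hui huo
      exact .inl ⟨w, hw, hwo, hwi.symm⟩
    · exact .inr rfl
  · rintro (⟨w, hw, hwo, rfl⟩ | rfl)
    · rcases eq_or_ne (w i) 0 with hwi | hwi
      · exact .inr hwi
      rw [N.range_mulVecLin_eq_orthogonal] at hw
      obtain ⟨u, hu, hui, huo⟩ :=
        hw.neg.exists_isElementary_of_mem_orthogonal hio.symm (by simp [hwo]) (by simpa using hwi)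
      exact .inl ⟨-u, hu.neg, by simp [hui], by simp [huo]⟩
    · exact .inr rfl
end

section
/- Let S and R be finite sets, N a real S×R matrix, W = range(N), W^⊥ = ker(Nᵀ), and fix distinct i, o ∈ S. Then the following three quantities are equal: (1) the supremum of {u_o : u ∈ W^⊥, and there exist w ∈ W and a strictly positive c̄ ∈ ℝ^S with u − e_i = diag(1/c̄)·w}; (2) the supremum of {u_o : u is elementary in W^⊥ and u_i = 1} ∪ {0}; (3) the supremum of {w_i : w is elementary in W and w_o = −1} ∪ {0}. (Combinatorial characterization of the maximal inverse Precision.) -/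
/-!
For weights `c > 0`, the vectors `u` in the first set are the `c`-weighted orthogonal projections
of `e_i` onto `V = W^⊥`; pairing `c • (u - e_i) ∈ W` with `u` gives `∑ c u² = c_i u_i`, so
`0 ≤ u_i ≤ 1`. Decompose `u` conformally into elementary vectors `g` of `V`: pairing
`c • (u - e_i)` with `g` shows `g_i > 0`, hence `g_o ≤ β g_i` for the supremum `β` of the second
set, and summing gives `u_o ≤ β u_i ≤ β`. Conversely, for an elementary `u` with `u_i = 1`, the
projections with weight `δ` on `supp u \ {i}` and `1` elsewhere tend to `u` as `δ → 0`, because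
`u` is the only vector of `V` that agrees with `e_i` off `supp u \ {i}`; and a weight tending
to `0` at `i` drives the projections to `0`.

For the third set, the `c`-projection `u` of `e_i` onto `V` and the `c⁻¹`-projection `p` of `e_o`
onto `V^⊥ = W` satisfy `u_o = -p_i` (pair `c • (u - e_i)` with `c⁻¹ • (p - e_o)`). Negating the
`i`-th coordinate turns this into the first equality for a sign-flipped copy of `W`, with `i`
and `o` exchanged.
-/

open Matrix

open Function

section Conformal

variable {S : Type*} {V : Submodule ℝ (S → ℝ)}

theorem IsElementary.smul_s6 {u : S → ℝ} (hu : IsElementary V u) {t : ℝ} (ht : t ≠ 0) :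
    IsElementary V (t • u) := by
  obtain ⟨hmem, hne, hmin⟩ := hu
  refine ⟨V.smul_mem t hmem, smul_ne_zero ht hne, ?_⟩
  rw [support_const_smul_of_ne_zero t u ht]
  exact hmin

theorem IsElementary.neg_s6 {u : S → ℝ} (hu : IsElementary V u) : IsElementary V (-u) := by
  simpa using hu.smul_s6 (t := -1) (by norm_num)

theorem IsElementary.eq_smul_of_support_subset {u v : S → ℝ} (hu : IsElementary V u)
    (hv : v ∈ V) (hsub : support v ⊆ support u) : ∃ t : ℝ, v = t • u := by
  obtain ⟨s, hs⟩ := support_nonempty_iff.mpr hu.2.1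
  refine ⟨v s / u s, ?_⟩
  by_contra hne
  have hsub' : support (v - (v s / u s) • u) ⊂ support u := by
    refine ⟨fun r hr => ?_, fun h => ?_⟩
    · by_contra hur
      simp_all [notMem_support.mp (mt (@hsub r) hur)]
    · have := h hs
      simp_all
  exact hu.2.2 _ (V.sub_mem hv (V.smul_mem _ hu.1)) (sub_ne_zero.mpr hne) hsub'

theorem IsElementary.eq_zero_of_apply_eq_zero {u v : S → ℝ} {i : S} (hu : IsElementary V u)
    (hui : u i ≠ 0) (hv : v ∈ V) (hvi : v i = 0) (hvu : ∀ s, u s = 0 → v s = 0) : v = 0 := by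
  obtain ⟨t, rfl⟩ := hu.eq_smul_of_support_subset hv fun s hs => by
    by_contra hus
    exact hs (hvu s (notMem_support.mp hus))
  simp_all

def IsConformal (g v : S → ℝ) : Prop :=
  support g ⊆ support v ∧ ∀ s, 0 ≤ g s * v s

theorem IsConformal.refl (v : S → ℝ) : IsConformal v v :=
  ⟨subset_rfl, fun s => mul_self_nonneg (v s)⟩

theorem IsConformal.trans {a b c : S → ℝ} (hab : IsConformal a b) (hbc : IsConformal b c) :
    IsConformal a c := by
  refine ⟨hab.1.trans hbc.1, fun s => ?_⟩
  by_cases ha : a s = 0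
  · simp [ha]
  have hb : b s ≠ 0 := hab.1 ha
  nlinarith [hab.2 s, hbc.2 s, mul_nonneg (hab.2 s) (hbc.2 s), mul_self_pos.mpr hb]

theorem IsConformal.smul_s6 {g v : S → ℝ} (h : IsConformal g v) {t : ℝ} (ht : 0 < t) :
    IsConformal (t • g) v := by
  refine ⟨(support_const_smul_of_ne_zero t g ht.ne').symm ▸ h.1, fun s => ?_⟩
  simpa [mul_assoc] using mul_nonneg ht.le (h.2 s)

theorem IsConformal.exists_pos_mul {g v : S → ℝ} (h : IsConformal g v) (hg : g ≠ 0) :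
    ∃ s, 0 < g s * v s := by
  obtain ⟨s, hs⟩ := support_nonempty_iff.mpr hg
  exact ⟨s, (h.2 s).lt_of_ne (mul_ne_zero hs (h.1 hs)).symm⟩

variable [Fintype S]

/-- Ratio test: the largest step along `g` that keeps `w - t • g` sign-compatible with `w`
kills a coordinate of `w`. -/
theorem exists_sub_smul_isConformal {g w : S → ℝ} (hsub : support g ⊆ support w)
    (hpos : ∃ s, 0 < g s * w s) :
    ∃ t : ℝ, 0 < t ∧ IsConformal (w - t • g) w ∧ support (w - t • g) ⊂ support w := by
  classical
  obtain ⟨s₀, hs₀, hmin⟩ := Finset.exists_min_image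
    (Finset.univ.filter fun s => 0 < g s * w s) (fun s => w s / g s)
    (by simpa [Finset.Nonempty] using hpos)
  simp only [Finset.mem_filter, Finset.mem_univ, true_and] at hs₀ hmin
  have hg₀ : g s₀ ≠ 0 := by rintro h; simp [h] at hs₀
  have ht : 0 < w s₀ / g s₀ := by
    rw [show w s₀ / g s₀ = g s₀ * w s₀ / g s₀ ^ 2 by field_simp]
    positivity
  have hconf : IsConformal (w - (w s₀ / g s₀) • g) w := by
    refine ⟨fun s hs => ?_, fun s => ?_⟩
    · by_contra hws
      have hgs : g s = 0 := notMem_support.mp (mt (@hsub s) hws)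
      simp_all
    · simp only [Pi.sub_apply, Pi.smul_apply, smul_eq_mul]
      rcases le_or_gt (g s * w s) 0 with hneg | hpos
      · nlinarith [sq_nonneg (w s)]
      · have hgs : g s ≠ 0 := by rintro h; simp [h] at hpos
        have : (w s - w s₀ / g s₀ * g s) * w s = g s * w s * (w s / g s - w s₀ / g s₀) := by
          field_simp
        rw [this]
        exact mul_nonneg hpos.le (sub_nonneg.mpr (hmin s hpos))
  refine ⟨w s₀ / g s₀, ht, hconf, hconf.1.ssubset_of_ne fun h => ?_⟩
  have hw₀ : w s₀ ≠ 0 := by rintro h; simp [h] at hs₀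
  have : s₀ ∈ support (w - (w s₀ / g s₀) • g) := h ▸ hw₀
  simp [hg₀] at this

/-- A nonzero vector of `V` conformal to `v` with minimal support is elementary. -/
theorem exists_isElementary_isConformal {v : S → ℝ} (hv : v ∈ V) (hv0 : v ≠ 0) :
    ∃ g, IsElementary V g ∧ IsConformal g v := by
  let C := {w | w ∈ V ∧ w ≠ 0 ∧ IsConformal w v}
  have hC : C.Nonempty := ⟨v, hv, hv0, .refl v⟩
  let w := argminOn (fun w => (support w).ncard) C hC
  obtain ⟨hwV, hw0, hwv⟩ : w ∈ C := argminOn_mem _ _ hC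
  refine ⟨w, ⟨hwV, hw0, fun w' hw'V hw'0 hsub => ?_⟩, hwv⟩
  obtain ⟨s, hs⟩ := support_nonempty_iff.mpr hw'0
  obtain ⟨g, hgV, hgsub, hg⟩ : ∃ g ∈ V, support g ⊂ support w ∧ ∃ s, 0 < g s * w s := by
    rcases (mul_ne_zero hs (hsub.1 hs)).lt_or_gt with h | h
    · exact ⟨-w', V.neg_mem hw'V, by rwa [support_neg], s, by simpa using h⟩
    · exact ⟨w', hw'V, hsub, s, h⟩
  obtain ⟨t, -, hconf, hlt⟩ := exists_sub_smul_isConformal hgsub.1 hg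
  obtain ⟨r, hrw, hrg⟩ := Set.exists_of_ssubset hgsub
  have hne : w - t • g ≠ 0 := fun h => hrw (by simpa [notMem_support.mp hrg] using congrFun h r)
  exact not_lt_argminOn (fun w => (support w).ncard) C (show w - t • g ∈ C from
    ⟨V.sub_mem hwV (V.smul_mem t hgV), hne, hconf.trans hwv⟩) (Set.ncard_lt_ncard hlt)

theorem exists_conformal_decomposition {v : S → ℝ} (hv : v ∈ V) :
    ∃ l : List (S → ℝ), (∀ g ∈ l, IsElementary V g ∧ IsConformal g v) ∧ l.sum = v := by
  induction hn : (support v).ncard using Nat.strong_induction_on generalizing v with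
  | _ n ih =>
  by_cases hv0 : v = 0
  · exact ⟨[], by simp, by simp [hv0]⟩
  obtain ⟨g, hg, hgv⟩ := exists_isElementary_isConformal hv hv0
  obtain ⟨t, ht, hconf, hlt⟩ := exists_sub_smul_isConformal hgv.1 (hgv.exists_pos_mul hg.2.1)
  obtain ⟨l, hl, hsum⟩ :=
    ih _ (hn ▸ Set.ncard_lt_ncard hlt) (V.sub_mem hv (V.smul_mem t hg.1)) rfl
  refine ⟨t • g :: l, ?_, by simp [hsum]⟩
  simp only [List.mem_cons, forall_eq_or_imp]
  exact ⟨⟨hg.smul_s6 ht.ne', hgv.smul_s6 ht⟩, fun g' hg' => (hl g' hg').imp_right (·.trans hconf)⟩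

end Conformal

section WeightedProjection

variable {S : Type*} [Fintype S] {V : Submodule ℝ (S → ℝ)}

def dotPerp (V : Submodule ℝ (S → ℝ)) : Submodule ℝ (S → ℝ) :=
  LinearMap.BilinForm.orthogonal (dotProductBilin ℝ ℝ : LinearMap.BilinForm ℝ (S → ℝ)) V

theorem mem_dotPerp {x : S → ℝ} : x ∈ dotPerp V ↔ ∀ v ∈ V, v ⬝ᵥ x = 0 :=
  Iff.rfl

theorem dotPerp_dotPerp (V : Submodule ℝ (S → ℝ)) : dotPerp (dotPerp V) = V := by
  refine LinearMap.BilinForm.orthogonal_orthogonal (B := dotProductBilin ℝ ℝ)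
    ⟨fun x hx => ?_, fun y hy => ?_⟩ (fun x y h => ?_) V
  · exact dotProduct_eq_zero_iff.mp hx
  · exact dotProduct_eq_zero_iff.mp fun x => by simpa [dotProduct_comm] using hy x
  · simpa [dotProduct_comm] using h

theorem ker_mulVecLin_transpose_eq_dotPerp {R : Type*} [Fintype R] (N : Matrix S R ℝ) :
    LinearMap.ker Nᵀ.mulVecLin = dotPerp (LinearMap.range N.mulVecLin) := by
  ext x
  simp only [LinearMap.mem_ker, mulVecLin_apply, mem_dotPerp, LinearMap.mem_range,
    forall_exists_index, forall_apply_eq_imp_iff, mulVec_transpose]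
  rw [← dotProduct_eq_zero_iff]
  simp_rw [dotProduct_comm (N *ᵥ _), dotProduct_mulVec]

def weightedDot (c : S → ℝ) : LinearMap.BilinForm ℝ (S → ℝ) :=
  (dotProductBilin ℝ ℝ : LinearMap.BilinForm ℝ (S → ℝ)).compl₂ (LinearMap.mulLeft ℝ c)

theorem weightedDot_apply (c x y : S → ℝ) : weightedDot c x y = ∑ s, c s * x s * y s := by
  simp only [weightedDot, LinearMap.compl₂_apply, dotProductBilin_apply_apply, dotProduct,
    LinearMap.mulLeft_apply, Pi.mul_apply]
  exact Finset.sum_congr rfl fun s _ => by ring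

def IsWeightedProjection (V : Submodule ℝ (S → ℝ)) (c x u : S → ℝ) : Prop :=
  u ∈ V ∧ c * (u - x) ∈ dotPerp V

/-- `V` is complementary to its `weightedDot c`-orthogonal, since that form is positive
definite. -/
theorem exists_isWeightedProjection (V : Submodule ℝ (S → ℝ)) {c : S → ℝ}
    (hc : ∀ s, 0 < c s) (x : S → ℝ) : ∃ u, IsWeightedProjection V c x u := by
  have hdef : ∀ v : S → ℝ, weightedDot c v v = 0 → v = 0 := by
    intro v hv
    rw [weightedDot_apply, Finset.sum_eq_zero_iff_of_nonneg
      fun s _ => by nlinarith [hc s, mul_self_nonneg (v s)]] at hv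
    funext s
    simpa [(hc s).ne'] using hv s (Finset.mem_univ s)
  have hcompl : IsCompl V ((weightedDot c).orthogonal V) := by
    refine LinearMap.BilinForm.isCompl_orthogonal_of_restrict_nondegenerate
      (fun x y h => ?_) ⟨fun v hv => Subtype.ext (hdef v (hv v)),
        fun v hv => Subtype.ext (hdef v (hv v))⟩
    rw [weightedDot_apply] at h ⊢
    simpa only [mul_right_comm] using h
  obtain ⟨u, hu, r, hr, rfl⟩ :=
    Submodule.mem_sup.mp (hcompl.sup_eq_top ▸ Submodule.mem_top (x := x))
  refine ⟨u, hu, ?_⟩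
  rw [show c * (u - (u + r)) = -(c * r) by ring]
  exact neg_mem (show c * r ∈ dotPerp V from hr)

theorem IsWeightedProjection.sum_mul_sq_sub_le {c x u v : S → ℝ}
    (h : IsWeightedProjection V c x u) (hc : ∀ s, 0 ≤ c s) (hv : v ∈ V) :
    ∑ s, c s * (u s - x s) ^ 2 ≤ ∑ s, c s * (v s - x s) ^ 2 := by
  have horth : (v - u) ⬝ᵥ (c * (u - x)) = 0 := h.2 _ (V.sub_mem hv h.1)
  have hsplit : ∑ s, c s * (v s - x s) ^ 2 = ∑ s, c s * (u s - x s) ^ 2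
      + ∑ s, c s * (v s - u s) ^ 2 + 2 * ((v - u) ⬝ᵥ (c * (u - x))) := by
    simp only [dotProduct, Finset.mul_sum, ← Finset.sum_add_distrib]
    exact Finset.sum_congr rfl fun s _ => by simp only [Pi.sub_apply, Pi.mul_apply]; ring
  rw [hsplit, horth]
  linarith [Finset.sum_nonneg fun s (_ : s ∈ Finset.univ) =>
    mul_nonneg (hc s) (sq_nonneg (v s - u s))]

variable [DecidableEq S]

theorem IsWeightedProjection.sum_mul_mul_eq {c u g : S → ℝ} {i : S}
    (h : IsWeightedProjection V c (Pi.single i 1) u) (hg : g ∈ V) :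
    ∑ s, c s * g s * u s = c i * g i := by
  have := mem_dotPerp.mp h.2 g hg
  rw [mul_sub, dotProduct_sub, sub_eq_zero] at this
  simpa [dotProduct, mul_left_comm, mul_comm, Pi.single_apply] using this

theorem IsWeightedProjection.apply_mem_Icc {c u : S → ℝ} {i : S} (hc : ∀ s, 0 < c s)
    (h : IsWeightedProjection V c (Pi.single i 1) u) : u i ∈ Set.Icc 0 1 := by
  have hsum := h.sum_mul_mul_eq h.1
  have hle : c i * u i * u i ≤ ∑ s, c s * u s * u s :=
    Finset.single_le_sum (f := fun s => c s * u s * u s)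
      (fun s _ => by nlinarith [hc s, mul_self_nonneg (u s)]) (Finset.mem_univ i)
  have := hc i
  constructor
  · nlinarith [mul_self_nonneg (u i)]
  · by_contra! h1
    nlinarith [mul_pos this (mul_pos (by linarith : (0 : ℝ) < u i) (sub_pos.mpr h1))]

theorem IsWeightedProjection.apply_pos_of_isConformal {c u g : S → ℝ} {i : S}
    (hc : ∀ s, 0 < c s) (h : IsWeightedProjection V c (Pi.single i 1) u) (hg : g ∈ V)
    (hg0 : g ≠ 0) (hgu : IsConformal g u) : 0 < g i := by
  have hpos : 0 < ∑ s, c s * g s * u s := by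
    obtain ⟨s, hs⟩ := hgu.exists_pos_mul hg0
    refine Finset.sum_pos' (fun s _ => ?_) ⟨s, Finset.mem_univ s, ?_⟩
    · simpa [mul_assoc] using mul_nonneg (hc s).le (hgu.2 s)
    · simpa [mul_assoc] using mul_pos (hc s) hs
  rw [h.sum_mul_mul_eq hg] at hpos
  exact pos_of_mul_pos_right hpos (hc i).le

theorem IsWeightedProjection.apply_add_apply_eq_zero {c u p : S → ℝ} {i o : S} (hio : i ≠ o)
    (hu : IsWeightedProjection V c (Pi.single i 1) u)
    (hp : IsWeightedProjection (dotPerp V) c⁻¹ (Pi.single o 1) p) (hc : ∀ s, c s ≠ 0) :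
    u o + p i = 0 := by
  have hpV : c⁻¹ * (p - Pi.single o 1) ∈ V := dotPerp_dotPerp V ▸ hp.2
  have hpair := mem_dotPerp.mp hu.2 _ hpV
  have hup : u ⬝ᵥ p = 0 := mem_dotPerp.mp hp.1 u hu.1
  have hcancel : (c⁻¹ * (p - Pi.single o 1)) ⬝ᵥ (c * (u - Pi.single i 1))
      = (p - Pi.single o 1) ⬝ᵥ (u - Pi.single i 1) := by
    simp only [dotProduct, Pi.mul_apply, Pi.inv_apply]
    exact Finset.sum_congr rfl fun s _ => by field_simp [hc s]
  rw [hcancel] at hpair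
  simp only [sub_dotProduct, dotProduct_sub, dotProduct_single, single_dotProduct,
    dotProduct_comm p u, hup, Pi.sub_apply, Pi.single_eq_of_ne hio] at hpair
  linarith

end WeightedProjection

section Suprema

variable {S : Type*} [Fintype S] [DecidableEq S] {V : Submodule ℝ (S → ℝ)}

def invPrecisions (V : Submodule ℝ (S → ℝ)) (i o : S) : Set ℝ :=
  {x | ∃ c u, (∀ s, 0 < c s) ∧ IsWeightedProjection V c (Pi.single i 1) u ∧ x = u o}

def elementaryRatios (V : Submodule ℝ (S → ℝ)) (i o : S) : Set ℝ :=
  {x | ∃ u, IsElementary V u ∧ u i = 1 ∧ x = u o}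

theorem mem_invPrecisions_iff_exists_div {i o : S} {x : ℝ} :
    x ∈ invPrecisions V i o ↔ ∃ u w cbar : S → ℝ, u ∈ V ∧ w ∈ dotPerp V ∧
      (∀ s, 0 < cbar s) ∧ (u - Pi.single i 1 = fun s => w s / cbar s) ∧ x = u o := by
  constructor
  · rintro ⟨c, u, hc, ⟨hu, hw⟩, rfl⟩
    refine ⟨u, _, c, hu, hw, hc, ?_, rfl⟩
    ext s
    simp [mul_div_cancel_left₀ _ (hc s).ne']
  · rintro ⟨u, w, c, hu, hw, hc, heq, rfl⟩
    refine ⟨c, u, hc, ⟨hu, ?_⟩, rfl⟩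
    convert hw using 1
    ext s
    simp [heq, mul_div_cancel₀ _ (hc s).ne']

omit [DecidableEq S] in
theorem elementaryRatios_finite (V : Submodule ℝ (S → ℝ)) (i o : S) :
    (elementaryRatios V i o).Finite := by
  have hinj : Set.InjOn support {u | IsElementary V u ∧ u i = 1} := by
    rintro u ⟨hu, hui⟩ v ⟨hv, hvi⟩ huv
    obtain ⟨t, rfl⟩ := hv.eq_smul_of_support_subset hu.1 huv.le
    simp_all
  refine ((Set.toFinite _).of_finite_image hinj).image (fun u => u o) |>.subset ?_
  rintro _ ⟨u, hu, hui, rfl⟩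
  exact ⟨u, ⟨hu, hui⟩, rfl⟩

theorem le_sSup_elementaryRatios_of_mem_invPrecisions {i o : S} {x : ℝ}
    (hx : x ∈ invPrecisions V i o) : x ≤ sSup (elementaryRatios V i o ∪ {0}) := by
  obtain ⟨c, u, hc, hu, rfl⟩ := hx
  set β := sSup (elementaryRatios V i o ∪ {0})
  have hbdd := ((elementaryRatios_finite V i o).union (Set.finite_singleton 0)).bddAbove
  have hpiece : ∀ g, IsElementary V g → IsConformal g u → 0 ≤ β * g i - g o := by
    intro g hg hgu
    have hgi := hu.apply_pos_of_isConformal hc hg.1 hg.2.1 hgu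
    have hmem : g o / g i ∈ elementaryRatios V i o :=
      ⟨(g i)⁻¹ • g, hg.smul_s6 (inv_ne_zero hgi.ne'), by simp [hgi.ne'], by simp [div_eq_inv_mul]⟩
    have := le_csSup hbdd (Or.inl hmem)
    rw [div_le_iff₀ hgi] at this
    linarith
  obtain ⟨l, hl, rfl⟩ := exists_conformal_decomposition hu.1
  let φ : (S → ℝ) →ₗ[ℝ] ℝ := β • LinearMap.proj i - LinearMap.proj o
  have hφ : 0 ≤ φ l.sum := by
    rw [map_list_sum]
    refine List.sum_nonneg fun x hx => ?_
    obtain ⟨g, hg, rfl⟩ := List.mem_map.mp hx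
    simpa [φ] using hpiece g (hl g hg).1 (hl g hg).2
  simp only [φ, LinearMap.sub_apply, LinearMap.smul_apply, LinearMap.proj_apply,
    smul_eq_mul] at hφ
  nlinarith [(hu.apply_mem_Icc hc).2, le_csSup hbdd (Or.inr rfl)]

theorem bddAbove_invPrecisions (V : Submodule ℝ (S → ℝ)) (i o : S) :
    BddAbove (invPrecisions V i o) :=
  ⟨_, fun _ => le_sSup_elementaryRatios_of_mem_invPrecisions⟩

theorem zero_le_sSup_invPrecisions (V : Submodule ℝ (S → ℝ)) {i o : S} (hio : i ≠ o) :
    0 ≤ sSup (invPrecisions V i o) := by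
  by_contra! hneg
  set σ := sSup (invPrecisions V i o)
  -- `c o * u o ^ 2 ≤ c i * u i * (1 - u i) ≤ c i`, and `c i` is chosen below `σ ^ 2`
  let c : S → ℝ := fun s => if s = i then σ ^ 2 / 2 else 1
  have hc : ∀ s, 0 < c s := fun s => by
    by_cases hs : s = i
    · simp only [c, if_pos hs]; nlinarith
    · simp [c, hs]
  obtain ⟨u, hu⟩ := exists_isWeightedProjection V hc (Pi.single i 1)
  have hle : u o ≤ σ := le_csSup (bddAbove_invPrecisions V i o) ⟨c, u, hc, hu, rfl⟩
  have hpair : c i * u i * u i + c o * u o * u o ≤ ∑ s, c s * u s * u s := by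
    rw [← Finset.sum_pair (f := fun s => c s * u s * u s) hio]
    exact Finset.sum_le_sum_of_subset_of_nonneg (Finset.subset_univ _)
      fun s _ _ => by nlinarith [hc s, mul_self_nonneg (u s)]
  rw [hu.sum_mul_mul_eq hu.1] at hpair
  have hui := hu.apply_mem_Icc hc
  simp only [c, if_pos rfl, if_neg hio.symm, one_mul] at hpair
  nlinarith [hui.1, hui.2, mul_self_nonneg (u i)]

omit [DecidableEq S] in
theorem exists_norm_le_mul_norm_restrict {T : Finset S}
    (h : ∀ v ∈ V, (∀ s ∈ T, v s = 0) → v = 0) :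
    ∃ K ≥ 0, ∀ v ∈ V, ‖v‖ ≤ K * ‖fun s : T => v s‖ := by
  let f : V →ₗ[ℝ] T → ℝ := (LinearMap.funLeft ℝ ℝ Subtype.val).comp V.subtype
  have hf : LinearMap.ker f = ⊥ :=
    LinearMap.ker_eq_bot'.mpr fun v hv =>
      Subtype.ext (h v v.2 fun s hs => congrFun hv ⟨s, hs⟩)
  obtain ⟨K, -, hK⟩ := f.exists_antilipschitzWith hf
  exact ⟨K, K.2, fun v hv => ZeroHomClass.bound_of_antilipschitz f hK ⟨v, hv⟩⟩

theorem IsWeightedProjection.norm_restrict_sub_le {T : Finset S} {δ : ℝ} {x u u' : S → ℝ}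
    (hδ : 0 ≤ δ) (h : IsWeightedProjection V (fun s => if s ∈ T then 1 else δ) x u')
    (hu : u ∈ V) (hxu : ∀ s ∈ T, u s = x s) :
    ‖fun s : T => (u' - u) s‖ ≤ √(δ * ∑ s, (u s - x s) ^ 2) := by
  set c : S → ℝ := fun s => if s ∈ T then 1 else δ
  have hc : ∀ s, 0 ≤ c s := fun s => by by_cases hs : s ∈ T <;> simp [c, hs, hδ]
  refine (pi_norm_le_iff_of_nonneg (Real.sqrt_nonneg _)).mpr fun s => ?_
  rw [Real.norm_eq_abs]
  refine Real.abs_le_sqrt ?_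
  calc (u' - u) s ^ 2 = c s * (u' s - x s) ^ 2 := by simp [c, s.2, hxu s s.2]
    _ ≤ ∑ s, c s * (u' s - x s) ^ 2 :=
        Finset.single_le_sum (f := fun s => c s * (u' s - x s) ^ 2)
          (fun s _ => mul_nonneg (hc s) (sq_nonneg _)) (Finset.mem_univ _)
    _ ≤ ∑ s, c s * (u s - x s) ^ 2 := h.sum_mul_sq_sub_le hc hu
    _ ≤ δ * ∑ s, (u s - x s) ^ 2 := by
        rw [Finset.mul_sum]
        refine Finset.sum_le_sum fun s _ => ?_
        by_cases hs : s ∈ T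
        · simp [c, hs, hxu s hs]
        · simp [c, hs]

theorem IsElementary.exists_isWeightedProjection_near {u : S → ℝ} {i : S}
    (hu : IsElementary V u) (hui : u i = 1) (o : S) :
    ∃ K, ∀ δ > 0, ∃ c u', (∀ s, 0 < c s) ∧ IsWeightedProjection V c (Pi.single i 1) u' ∧
      |u' o - u o| ≤ K * √(δ * ∑ s, (u s - (Pi.single i 1 : S → ℝ) s) ^ 2) := by
  let T := Finset.univ.filter fun s => s = i ∨ u s = 0
  have hTu : ∀ s ∈ T, u s = (Pi.single i 1 : S → ℝ) s := by
    intro s hs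
    rcases (Finset.mem_filter.mp hs).2 with rfl | h
    · simp [hui]
    · have : s ≠ i := by rintro rfl; simp [hui] at h
      simp [h, this]
  obtain ⟨K, hK0, hK⟩ := exists_norm_le_mul_norm_restrict (V := V) (T := T)
    fun v hv hvT => hu.eq_zero_of_apply_eq_zero (by simp [hui]) hv (hvT i (by simp [T]))
      fun s hs => hvT s (by simp [T, hs])
  refine ⟨K, fun δ hδ => ?_⟩
  let c : S → ℝ := fun s => if s ∈ T then 1 else δ
  have hc : ∀ s, 0 < c s := fun s => by by_cases hs : s ∈ T <;> simp [c, hs, hδ]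
  obtain ⟨u', hu'⟩ := exists_isWeightedProjection V hc (Pi.single i 1)
  refine ⟨c, u', hc, hu', ?_⟩
  calc |u' o - u o| = ‖(u' - u) o‖ := rfl
    _ ≤ ‖u' - u‖ := norm_le_pi_norm (u' - u) o
    _ ≤ K * ‖fun s : T => (u' - u) s‖ := hK _ (V.sub_mem hu'.1 hu.1)
    _ ≤ K * √(δ * ∑ s, (u s - (Pi.single i 1 : S → ℝ) s) ^ 2) :=
        mul_le_mul_of_nonneg_left (hu'.norm_restrict_sub_le hδ.le hu.1 hTu) hK0

open Filter Topology in
theorem IsElementary.le_sSup_invPrecisions {u : S → ℝ} {i : S} (hu : IsElementary V u)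
    (hui : u i = 1) (o : S) : u o ≤ sSup (invPrecisions V i o) := by
  obtain ⟨K, hK⟩ := hu.exists_isWeightedProjection_near hui o
  set m := ∑ s, (u s - (Pi.single i 1 : S → ℝ) s) ^ 2
  have hlim : Tendsto (fun δ => K * √(δ * m)) (𝓝[>] 0) (𝓝 0) := by
    have : Continuous fun δ => K * √(δ * m) := by fun_prop
    simpa using (this.tendsto 0).mono_left nhdsWithin_le_nhds
  refine le_of_forall_pos_le_add fun ε hε => ?_
  obtain ⟨δ, hδε, hδ⟩ := ((hlim.eventually (gt_mem_nhds hε)).and self_mem_nhdsWithin).exists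
  obtain ⟨c, u', hc, hu', hclose⟩ := hK δ hδ
  have := le_csSup (bddAbove_invPrecisions V i o) ⟨c, u', hc, hu', rfl⟩
  linarith [(abs_le.mp hclose).1]

theorem sSup_invPrecisions (V : Submodule ℝ (S → ℝ)) {i o : S} (hio : i ≠ o) :
    sSup (invPrecisions V i o) = sSup (elementaryRatios V i o ∪ {0}) := by
  have h0 := zero_le_sSup_invPrecisions V hio
  refine le_antisymm (Real.sSup_le (fun x hx => le_sSup_elementaryRatios_of_mem_invPrecisions hx)
    ?_) (Real.sSup_le ?_ h0)
  · exact le_csSup ((elementaryRatios_finite V i o).union (Set.finite_singleton 0)).bddAbove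
      (Or.inr rfl)
  · rintro _ (⟨u, hu, hui, rfl⟩ | rfl)
    exacts [hu.le_sSup_invPrecisions hui o, h0]

theorem neg_mem_invPrecisions_dotPerp {i o : S} (hio : i ≠ o) {x : ℝ}
    (hx : x ∈ invPrecisions V i o) : -x ∈ invPrecisions (dotPerp V) o i := by
  obtain ⟨c, u, hc, hu, rfl⟩ := hx
  have hc' : ∀ s, 0 < c⁻¹ s := fun s => inv_pos.mpr (hc s)
  obtain ⟨p, hp⟩ := exists_isWeightedProjection (dotPerp V) hc' (Pi.single o 1)
  refine ⟨c⁻¹, p, hc', hp, ?_⟩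
  linarith [hu.apply_add_apply_eq_zero hio hp fun s => (hc s).ne']

end Suprema

section NegAt

variable {S : Type*} [Fintype S] [DecidableEq S]

def negAt (i : S) : (S → ℝ) →ₗ[ℝ] (S → ℝ) :=
  LinearMap.mulLeft ℝ (update 1 i (-1))

omit [Fintype S] in
theorem negAt_apply (i : S) (v : S → ℝ) (s : S) :
    negAt i v s = if s = i then -v s else v s := by
  by_cases hs : s = i <;> simp [negAt, hs]

omit [Fintype S] in
theorem negAt_negAt (i : S) (v : S → ℝ) : negAt i (negAt i v) = v := by
  ext s; by_cases hs : s = i <;> simp [negAt_apply, hs]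

omit [Fintype S] in
theorem negAt_eq_zero {i : S} {v : S → ℝ} : negAt i v = 0 ↔ v = 0 :=
  ⟨fun h => by simpa [negAt_negAt] using congrArg (negAt i) h, fun h => by simp [h]⟩

omit [Fintype S] in
theorem support_negAt (i : S) (v : S → ℝ) : support (negAt i v) = support v := by
  ext s; by_cases hs : s = i <;> simp [negAt_apply, hs]

omit [Fintype S] in
theorem negAt_mul (i : S) (c v : S → ℝ) : negAt i (c * v) = c * negAt i v := by
  ext s; by_cases hs : s = i <;> simp [negAt_apply, hs]

omit [Fintype S] in
theorem negAt_single {i o : S} (hio : i ≠ o) : negAt i (Pi.single o 1) = Pi.single o 1 := by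
  ext s; by_cases hs : s = i <;> simp [negAt_apply, hs, hio]

theorem negAt_dotProduct (i : S) (x y : S → ℝ) : negAt i x ⬝ᵥ y = x ⬝ᵥ negAt i y := by
  simp only [dotProduct, negAt_apply]
  exact Finset.sum_congr rfl fun s _ => by split_ifs <;> ring

theorem dotPerp_comap_negAt (i : S) (W : Submodule ℝ (S → ℝ)) :
    dotPerp (W.comap (negAt i)) = (dotPerp W).comap (negAt i) := by
  ext x
  simp only [Submodule.mem_comap, mem_dotPerp]
  constructor
  · intro hx w hw
    simpa [negAt_dotProduct, negAt_negAt] using hx (negAt i w) (by rwa [negAt_negAt])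
  · intro hx v hv
    simpa [negAt_dotProduct, negAt_negAt] using hx _ hv

omit [Fintype S] in
theorem isElementary_comap_negAt {i : S} {W : Submodule ℝ (S → ℝ)} {v : S → ℝ} :
    IsElementary (W.comap (negAt i)) v ↔ IsElementary W (negAt i v) := by
  simp only [IsElementary, Submodule.mem_comap, ne_eq, negAt_eq_zero, support_negAt]
  refine and_congr_right fun _ => and_congr_right fun _ => ⟨fun h w hw => ?_, fun h w => ?_⟩
  · simpa [negAt_eq_zero, support_negAt] using h (negAt i w) (by rwa [negAt_negAt])
  · simpa [negAt_eq_zero, support_negAt] using h (negAt i w)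

theorem mem_invPrecisions_comap_negAt {i o : S} (hio : i ≠ o) {W : Submodule ℝ (S → ℝ)}
    {x : ℝ} : x ∈ invPrecisions (W.comap (negAt i)) o i ↔ -x ∈ invPrecisions W o i := by
  have key : ∀ c u, IsWeightedProjection (W.comap (negAt i)) c (Pi.single o 1) u ↔
      IsWeightedProjection W c (Pi.single o 1) (negAt i u) := fun c u => by
    simp only [IsWeightedProjection, dotPerp_comap_negAt, Submodule.mem_comap, negAt_mul,
      map_sub, negAt_single hio]
  constructor
  · rintro ⟨c, u, hc, hu, rfl⟩
    exact ⟨c, negAt i u, hc, (key c u).mp hu, by simp [negAt_apply]⟩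
  · rintro ⟨c, u, hc, hu, hx⟩
    refine ⟨c, negAt i u, hc, (key c _).mpr (by rwa [negAt_negAt]), ?_⟩
    simp [negAt_apply, ← hx]

omit [Fintype S] in
theorem elementaryRatios_comap_negAt {i o : S} (hio : i ≠ o) (W : Submodule ℝ (S → ℝ)) :
    elementaryRatios (W.comap (negAt i)) o i =
      {x | ∃ w, IsElementary W w ∧ w o = -1 ∧ x = w i} := by
  ext x
  constructor
  · rintro ⟨v, hv, hvo, rfl⟩
    refine ⟨-negAt i v, (isElementary_comap_negAt.mp hv).neg_s6, ?_, ?_⟩ <;>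
      simp [negAt_apply, hio.symm, hvo]
  · rintro ⟨w, hw, hwo, rfl⟩
    refine ⟨-negAt i w, isElementary_comap_negAt.mpr ?_, ?_, ?_⟩
    · simpa [negAt_negAt] using hw.neg_s6
    all_goals simp [negAt_apply, hio.symm, hwo]

theorem invPrecisions_eq_comap_negAt_dotPerp (V : Submodule ℝ (S → ℝ)) {i o : S}
    (hio : i ≠ o) : invPrecisions V i o = invPrecisions ((dotPerp V).comap (negAt i)) o i := by
  ext x
  rw [mem_invPrecisions_comap_negAt hio]
  refine ⟨neg_mem_invPrecisions_dotPerp hio, fun hx => ?_⟩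
  simpa [dotPerp_dotPerp] using neg_mem_invPrecisions_dotPerp hio.symm hx

end NegAt

/-- Theorem 3.4 (`th:UpperBoundsInvP`): combinatorial characterization of the maximal inverse
Precision: the three suprema coincide. -/
theorem maxInvP_characterization
    {S R : Type*} [Fintype S] [Fintype R] [DecidableEq S]
    (N : Matrix S R ℝ) (i o : S) (hio : i ≠ o) :
    sSup {x : ℝ | ∃ u w cbar : S → ℝ,
        u ∈ LinearMap.ker Nᵀ.mulVecLin ∧
        w ∈ LinearMap.range N.mulVecLin ∧
        (∀ s, 0 < cbar s) ∧
        (u - Pi.single i 1 = fun s => w s / cbar s) ∧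
        x = u o} =
      sSup ({x : ℝ | ∃ u : S → ℝ,
        IsElementary (LinearMap.ker Nᵀ.mulVecLin) u ∧ u i = 1 ∧ x = u o} ∪ {0}) ∧
    sSup ({x : ℝ | ∃ u : S → ℝ,
        IsElementary (LinearMap.ker Nᵀ.mulVecLin) u ∧ u i = 1 ∧ x = u o} ∪ {0}) =
      sSup ({x : ℝ | ∃ w : S → ℝ,
        IsElementary (LinearMap.range N.mulVecLin) w ∧ w o = -1 ∧ x = w i} ∪ {0}) := by
  have hrange : LinearMap.range N.mulVecLin = dotPerp (LinearMap.ker Nᵀ.mulVecLin) := by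
    rw [ker_mulVecLin_transpose_eq_dotPerp, dotPerp_dotPerp]
  set V := LinearMap.ker Nᵀ.mulVecLin
  have hA : {x : ℝ | ∃ u w cbar : S → ℝ, u ∈ V ∧ w ∈ LinearMap.range N.mulVecLin ∧
      (∀ s, 0 < cbar s) ∧ (u - Pi.single i 1 = fun s => w s / cbar s) ∧ x = u o} =
      invPrecisions V i o := by
    ext x
    rw [hrange]
    exact mem_invPrecisions_iff_exists_div.symm
  refine ⟨by rw [hA, sSup_invPrecisions V hio]; rfl, ?_⟩
  calc sSup (elementaryRatios V i o ∪ {0})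
      = sSup (invPrecisions ((dotPerp V).comap (negAt i)) o i) := by
        rw [← sSup_invPrecisions V hio, invPrecisions_eq_comap_negAt_dotPerp V hio]
    _ = _ := by
        rw [sSup_invPrecisions _ hio.symm, elementaryRatios_comap_negAt hio, ← hrange]
end

section
/- Let S and R be finite sets, N a real S×R matrix, and fix i, o ∈ S. For strictly positive c̄ ∈ ℝ^S and nonnegative k ∈ ℝ^R write A(c̄,k) = −diag(c̄)⁻¹ · N · diag(k) · Nᵀ. Suppose c̄ ∈ ℝ^S is strictly positive, k ∈ ℝ^R is nonnegative, and e^{tA(c̄,k)} converges entrywise to a matrix L as t → +∞. Then for every ε > 0 there exist a strictly positive c̄' ∈ ℝ^S, a strictly positive k' ∈ ℝ^R, and t' ≥ 0 such that (e^{t'A(c̄',k')})_{oi} > L_{oi} − ε. (The maximal Sensitivity is bounded below by the maximal inverse Precision over all subsystems.) -/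
/-!
A nonnegative rate vector `k` is a limit of strictly positive ones, `k + δ` with `δ ↓ 0`, and
for a fixed time `t` the entry `(e^{tA(c̄,k)})_{oi}` depends continuously on `k`. So first choose
`t ≥ 0` with `(e^{tA(c̄,k)})_{oi} > L_{oi} - ε`, which the convergence provides, and then perturb
`k` to a strictly positive vector without losing this strict inequality.
-/

open Matrix NormedSpace

/-- The linearized reaction matrix `A(c̄,k) = −diag(c̄)⁻¹ N diag(k) Nᵀ`. -/
noncomputable def linMatrix {S R : Type*} [Fintype S] [Fintype R] [DecidableEq S]
    [DecidableEq R] (N : Matrix S R ℝ) (c : S → ℝ) (k : R → ℝ) : Matrix S S ℝ :=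
  -(Matrix.diagonal (fun s => (c s)⁻¹) * N * Matrix.diagonal k * Nᵀ)

open Filter Topology

theorem Filter.Eventually.exists_pos_of_nonneg {ι : Type*} {k : ι → ℝ}
    (hk : ∀ r, 0 ≤ k r) {P : (ι → ℝ) → Prop} (hP : ∀ᶠ k' in 𝓝 k, P k') :
    ∃ k', (∀ r, 0 < k' r) ∧ P k' := by
  have hshift : Tendsto (fun δ : ℝ => k + fun _ => δ) (𝓝[>] 0) (𝓝 k) := by
    have hcont : Continuous fun δ : ℝ => k + fun _ => δ :=
      continuous_const.add (continuous_pi fun _ => continuous_id)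
    exact (hcont.tendsto' 0 k (add_zero k)).mono_left nhdsWithin_le_nhds
  obtain ⟨δ, hδP, hδ⟩ := ((hshift.eventually hP).and self_mem_nhdsWithin).exists
  exact ⟨_, fun r => add_pos_of_nonneg_of_pos (hk r) hδ, hδP⟩

section linMatrix

attribute [local instance] Matrix.linftyOpNormedRing Matrix.linftyOpNormedAlgebra

variable {S R : Type*} [Fintype S] [Fintype R] [DecidableEq S] [DecidableEq R]

theorem continuous_linMatrix (N : Matrix S R ℝ) (c : S → ℝ) :
    Continuous fun k : R → ℝ => linMatrix N c k :=
  ((continuous_const.matrix_mul continuous_id.matrix_diagonal).matrix_mul continuous_const).neg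

theorem continuous_exp_smul_linMatrix (N : Matrix S R ℝ) (c : S → ℝ) (t : ℝ) :
    Continuous fun k : R → ℝ => exp (t • linMatrix N c k) :=
  exp_continuous.comp ((continuous_linMatrix N c).const_smul t)

end linMatrix

/-- Theorem 4.6: the maximal Sensitivity is bounded from below by the maximal inverse
Precision over all subsystems: if, for parameters `(c̄,k)` with `k ≥ 0`, `e^{tA(c̄,k)}` tends
entrywise to `L` as `t → ∞`, then for every `ε > 0` the value `L_{oi}` is approached to
within `ε` by `(e^{t'A(c̄',k')})_{oi}` for some strictly positive parameters and `t' ≥ 0`. -/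
theorem maxSensitivity_ge_invPrecision_subsystem
    {S R : Type*} [Fintype S] [Fintype R] [DecidableEq S] [DecidableEq R]
    (N : Matrix S R ℝ) (i o : S)
    (cbar : S → ℝ) (hcbar : ∀ s, 0 < cbar s)
    (k : R → ℝ) (hk : ∀ r, 0 ≤ k r)
    (L : Matrix S S ℝ)
    (hL : Filter.Tendsto (fun t : ℝ => NormedSpace.exp (t • linMatrix N cbar k)) Filter.atTop (nhds L))
    (ε : ℝ) (hε : 0 < ε) :
    ∃ (cbar' : S → ℝ) (k' : R → ℝ) (t' : ℝ),
      (∀ s, 0 < cbar' s) ∧ (∀ r, 0 < k' r) ∧ 0 ≤ t' ∧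
      NormedSpace.exp (t' • linMatrix N cbar' k') o i > L o i - ε := by
  have hentry : Tendsto (fun t : ℝ => exp (t • linMatrix N cbar k) o i) atTop (𝓝 (L o i)) :=
    tendsto_pi_nhds.mp (tendsto_pi_nhds.mp hL o) i
  obtain ⟨t, ht, hLt⟩ := ((eventually_ge_atTop 0).and
    (hentry.eventually (eventually_gt_nhds (sub_lt_self _ hε)))).exists
  have hnear : ∀ᶠ k' in 𝓝 k, L o i - ε < exp (t • linMatrix N cbar k') o i :=
    ((continuous_apply_apply o i).comp
      (continuous_exp_smul_linMatrix N cbar t)).continuousAt.eventually (eventually_gt_nhds hLt)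
  obtain ⟨k', hk', hk'near⟩ := hnear.exists_pos_of_nonneg hk
  exact ⟨cbar, k', t, hcbar, hk', ht, hk'near⟩
end
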